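/- Let K be a field, n ≥ 2, t₁,…,t_n ∈ K with t_j ≠ 0 and t_j ≠ 1 for all j, and let c : K → K be a ring homomorphism with c(t_j) = t_j⁻¹ for all j. Then for every permutation τ of {1,…,n} and every index i with 1 ≤ i ≤ n−1, the matrix γ = U_{n;i}(t_{τ(i)}) satisfies Ω(τ∘(i,i+1))·γ⁻¹ = γ̄ᵀ·Ω(τ), where (i,i+1) is the transposition of i and i+1. -/

import Mathlib

/-
Write `A, B` for the 0-indexed rows `i - 1, i` (so `GassnerU K n i` has its block in rows and
columns `A, B`) and `u = t (τ A)`. As `c u = u⁻¹`, it suffices to show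
`Ω(τ ∘ (A B)) = U(u⁻¹)ᵀ Ω(τ) U(u)` and that `U(u)` is invertible; the latter follows from the
quadratic relation `U(u)² = (1 - u) U(u) + u`.
Right multiplication by `U(u)` only mixes columns `A, B` and fixes every row whose `A`- and
`B`-entries agree; left multiplication by `U(u⁻¹)ᵀ` does the same for rows. Since `A, B` are
adjacent, every row and column of `Ω(τ)` outside the `{A, B}` block has equal entries at `A` and
`B`, so both sides agree off the block, where `Ω(τ ∘ (A B))` and `Ω(τ)` coincide. On the block the
identity is a `2 × 2` computation using `(1 - u)⁻¹ (1 - u) = 1` and `u⁻¹ u = 1`.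
-/

open Matrix

/-- `U K n i t` is the `n × n` matrix over `K` (1-indexed rows/columns `1,…,n`) that equals
the identity matrix except that its `2 × 2` block in rows `i, i+1` and columns `i, i+1`
is `((1-t, 1), (t, 0))`.  A row index `r : Fin n` corresponds to the 1-indexed row `r.val + 1`. -/
def GassnerU (K : Type*) [CommRing K] (n : ℕ) (i : ℕ) (t : K) : Matrix (Fin n) (Fin n) K :=
  Matrix.of fun r c =>
    if r.val + 1 = i ∧ c.val + 1 = i then 1 - t
    else if r.val + 1 = i ∧ c.val = i then 1
    else if r.val = i ∧ c.val + 1 = i then t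
    else if r.val = i ∧ c.val = i then 0
    else if r = c then 1 else 0

/-- `Ω(τ)`: the `n × n` matrix with diagonal entries `(1 - t (τ r))⁻¹`, entries below the
diagonal equal to `1`, and entries above the diagonal equal to `0`. -/
def GassnerOmega {K : Type*} [Field K] {n : ℕ} (t : Fin n → K) (τ : Equiv.Perm (Fin n)) :
    Matrix (Fin n) (Fin n) K :=
  Matrix.of fun r c => if r = c then (1 - t (τ r))⁻¹ else if c < r then 1 else 0

section
variable {K : Type*} [CommRing K] {n : ℕ}

lemma GassnerU_map {L : Type*} [CommRing L] (c : K →+* L) (i : ℕ) (u : K) :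
    (GassnerU K n i u).map c = GassnerU L n i (c u) := by
  ext r s
  simp only [GassnerU, map_apply, of_apply]
  split_ifs <;> simp

variable {A B : Fin n}

lemma GassnerU_apply_of_succ_eq (hAB : A.val + 1 = B.val) (u : K) (k s : Fin n) :
    GassnerU K n B u k s =
      if s = A then (if k = A then 1 - u else if k = B then u else 0)
      else if s = B then (if k = A then 1 else 0)
      else if k = s then 1 else 0 := by
  simp only [GassnerU, of_apply, Fin.ext_iff]
  split_ifs <;> first | rfl | omega

lemma mul_GassnerU_apply (hAB : A.val + 1 = B.val) (M : Matrix (Fin n) (Fin n) K) (u : K)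
    (r s : Fin n) :
    (M * GassnerU K n B u) r s =
      if s = A then (1 - u) * M r A + u * M r B
      else if s = B then M r A
      else M r s := by
  have hAB' : A ≠ B := by omega
  simp only [mul_apply, GassnerU_apply_of_succ_eq hAB]
  split_ifs with hsA hsB
  · rw [Fintype.sum_eq_add A B hAB' fun k hk => by simp [hk.1, hk.2]]
    simp [hAB'.symm, mul_comm]
  · rw [Fintype.sum_eq_single A fun k hk => by simp [hk]]
    simp
  · rw [Fintype.sum_eq_single s fun k hk => by simp [hk]]
    simp

lemma GassnerU_mul_self (hAB : A.val + 1 = B.val) (u : K) :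
    GassnerU K n B u * GassnerU K n B u = (1 - u) • GassnerU K n B u + u • 1 := by
  ext r s
  rw [mul_GassnerU_apply hAB]
  simp only [Matrix.add_apply, Matrix.smul_apply, one_apply, GassnerU_apply_of_succ_eq hAB,
    smul_eq_mul]
  split_ifs <;> simp_all

lemma isUnit_det_GassnerU (hAB : A.val + 1 = B.val) {u : K} (hu : IsUnit u) :
    IsUnit (GassnerU K n B u).det := by
  refine isUnit_det_of_right_inverse (B := (↑hu.unit⁻¹ : K) • (GassnerU K n B u - (1 - u) • 1)) ?_
  rw [mul_smul_comm, mul_sub, GassnerU_mul_self hAB, mul_smul_comm, mul_one, add_sub_cancel_left,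
    smul_smul, hu.val_inv_mul, one_smul]

lemma GassnerU_transpose_mul_apply (hAB : A.val + 1 = B.val) (M : Matrix (Fin n) (Fin n) K)
    (u : K) (r s : Fin n) :
    ((GassnerU K n B u)ᵀ * M) r s =
      if r = A then (1 - u) * M A s + u * M B s
      else if r = B then M A s
      else M r s := by
  rw [← transpose_transpose ((GassnerU K n B u)ᵀ * M), transpose_mul, transpose_transpose,
    transpose_apply, mul_GassnerU_apply hAB]
  rfl

lemma mul_GassnerU_apply_of_apply_eq (hAB : A.val + 1 = B.val) (M : Matrix (Fin n) (Fin n) K)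
    (u : K) {r : Fin n} (h : M r A = M r B) (s : Fin n) : (M * GassnerU K n B u) r s = M r s := by
  rw [mul_GassnerU_apply hAB]
  split_ifs with hsA hsB
  · rw [hsA, h]; ring
  · rw [hsB, h]
  · rfl

lemma GassnerU_transpose_mul_apply_of_apply_eq (hAB : A.val + 1 = B.val)
    (M : Matrix (Fin n) (Fin n) K) (u : K) {s : Fin n} (h : M A s = M B s) (r : Fin n) :
    ((GassnerU K n B u)ᵀ * M) r s = M r s := by
  rw [← transpose_apply M, ← mul_GassnerU_apply_of_apply_eq hAB Mᵀ u h,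
    ← transpose_apply (Mᵀ * _), transpose_mul, transpose_transpose]

end

section
variable {K : Type*} [Field K] {n : ℕ} (t : Fin n → K)

lemma GassnerOmega_apply_self (τ : Equiv.Perm (Fin n)) (r : Fin n) :
    GassnerOmega t τ r r = (1 - t (τ r))⁻¹ := by
  simp [GassnerOmega]

lemma GassnerOmega_apply_of_lt (τ : Equiv.Perm (Fin n)) {r s : Fin n} (h : r < s) :
    GassnerOmega t τ r s = 0 := by
  simp [GassnerOmega, h.ne, h.not_gt]

lemma GassnerOmega_apply_of_gt (τ : Equiv.Perm (Fin n)) {r s : Fin n} (h : s < r) :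
    GassnerOmega t τ r s = 1 := by
  simp [GassnerOmega, h.ne', h]

lemma GassnerOmega_mul_apply_of_ne (τ σ : Equiv.Perm (Fin n)) {r s : Fin n} (h : r ≠ s) :
    GassnerOmega t (τ * σ) r s = GassnerOmega t τ r s := by
  simp [GassnerOmega, h]

lemma GassnerOmega_mul_apply_of_apply_eq (τ σ : Equiv.Perm (Fin n)) {r : Fin n} (h : σ r = r)
    (s : Fin n) : GassnerOmega t (τ * σ) r s = GassnerOmega t τ r s := by
  simp [GassnerOmega, h]

variable {A B : Fin n} (τ : Equiv.Perm (Fin n))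

lemma GassnerOmega_apply_eq_apply_of_adjacent_cols (hAB : A.val + 1 = B.val) {r : Fin n} (hrA : r ≠ A)
    (hrB : r ≠ B) : GassnerOmega t τ r A = GassnerOmega t τ r B := by
  simp only [GassnerOmega, of_apply, if_neg hrA, if_neg hrB, Fin.lt_def]
  rw [Ne, Fin.ext_iff] at hrA hrB
  split_ifs <;> first | rfl | omega

lemma GassnerOmega_apply_eq_apply_of_adjacent_rows (hAB : A.val + 1 = B.val) {s : Fin n} (hsA : s ≠ A)
    (hsB : s ≠ B) : GassnerOmega t τ A s = GassnerOmega t τ B s := by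
  simp only [GassnerOmega, of_apply, if_neg hsA.symm, if_neg hsB.symm, Fin.lt_def]
  rw [Ne, Fin.ext_iff] at hsA hsB
  split_ifs <;> first | rfl | omega

lemma GassnerOmega_mul_swap_eq (hAB : A.val + 1 = B.val) (ht0 : t (τ A) ≠ 0)
    (ht1 : t (τ A) ≠ 1) :
    GassnerOmega t (τ * Equiv.swap A B) =
      (GassnerU K n B (t (τ A))⁻¹)ᵀ * GassnerOmega t τ * GassnerU K n B (t (τ A)) := by
  have hlt : A < B := by omega
  have hAB' : A ≠ B := hlt.ne
  ext r s
  by_cases hr : r = A ∨ r = B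
  · by_cases hs : s = A ∨ s = B
    · have h1 : 1 - t (τ A) ≠ 0 := sub_ne_zero.mpr (Ne.symm ht1)
      rcases hr with hr | hr <;> rcases hs with hs | hs <;> subst r s <;>
        simp [mul_GassnerU_apply hAB, GassnerU_transpose_mul_apply hAB, hAB'.symm,
          GassnerOmega_apply_self, GassnerOmega_apply_of_lt t _ hlt,
          GassnerOmega_apply_of_gt t _ hlt] <;> field_simp <;> ring
    · obtain ⟨hsA, hsB⟩ := not_or.mp hs
      rw [GassnerOmega_mul_apply_of_ne t τ _ (by rintro rfl; tauto), mul_GassnerU_apply hAB,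
        if_neg hsA, if_neg hsB, GassnerU_transpose_mul_apply_of_apply_eq hAB _ _
          (GassnerOmega_apply_eq_apply_of_adjacent_rows t τ hAB hsA hsB)]
  · obtain ⟨hrA, hrB⟩ := not_or.mp hr
    rw [GassnerOmega_mul_apply_of_apply_eq t τ _ (Equiv.swap_apply_of_ne_of_ne hrA hrB), mul_assoc,
      GassnerU_transpose_mul_apply hAB, if_neg hrA, if_neg hrB,
      mul_GassnerU_apply_of_apply_eq hAB _ _ (GassnerOmega_apply_eq_apply_of_adjacent_cols t τ hAB hrA hrB)]
end

/-- Unitarity property for a positive generator below an arbitrary permutation `τ`: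
for `γ = U_{n;i}(t_{τ(i)})` one has `Ω(τ ∘ (i,i+1)) · γ⁻¹ = γ̄ᵀ · Ω(τ)`, where `γ̄` is the
entrywise application of the ring homomorphism `c` (which satisfies `c (t_j) = t_j⁻¹`). -/
theorem gassner_unitarity_pos_generator_perm {K : Type*} [Field K] (n : ℕ)
    (t : Fin n → K) (ht0 : ∀ j, t j ≠ 0) (ht1 : ∀ j, t j ≠ 1)
    (c : K →+* K) (hc : ∀ j, c (t j) = (t j)⁻¹)
    (τ : Equiv.Perm (Fin n)) (i : ℕ) (hi1 : 1 ≤ i) (hi2 : i ≤ n - 1) :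
    GassnerOmega t (τ * Equiv.swap (⟨i - 1, by omega⟩ : Fin n) ⟨i, by omega⟩) *
        (GassnerU K n i (t (τ ⟨i - 1, by omega⟩)))⁻¹ =
      ((GassnerU K n i (t (τ ⟨i - 1, by omega⟩))).map c)ᵀ * GassnerOmega t τ := by
  set A : Fin n := ⟨i - 1, by omega⟩
  set B : Fin n := ⟨i, by omega⟩
  have hAB : A.val + 1 = B.val := by simp [A, B]; omega
  rw [GassnerU_map, hc, GassnerOmega_mul_swap_eq t τ hAB (ht0 _) (ht1 _)]
  exact mul_nonsing_inv_cancel_right _ _ (isUnit_det_GassnerU hAB (ht0 _).isUnit)
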